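/- arXiv:2307.04538 — 3 statements merged into one kernel-verified Lean document; each statement's English description precedes it below -/
import Mathlib

section
/- Let π : G → U(H) be a unitary representation of a locally compact group on a nonzero complex Hilbert space H and let (μ_n)_{n>0} be a family of bounded symmetric Borel measures on G. Suppose that for all v,w,v',w' ∈ H one has lim_{n→∞} ∫_G ⟨π(g)v,w⟩·conj(⟨π(g)v',w'⟩) dμ_n(g) = ⟨v,v'⟩·conj(⟨w,w'⟩). Then π is irreducible. -/
open MeasureTheory Filter Topology

local notation "⟪" x ", " y "⟫" => @inner ℂ _ _ x y
local notation "conj'" => starRingEnd ℂ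

/-! A nonzero proper closed invariant subspace `V` would give nonzero `v ∈ V`, `w ∈ Vᗮ` whose
matrix coefficient `g ↦ ⟪π g v, w⟫` vanishes identically, so the integrals in the hypothesis are
all zero, while their limit `‖v‖² ‖w‖²` is not. -/

section

variable {H : Type*} [NormedAddCommGroup H] [InnerProductSpace ℂ H]

theorem Submodule.eq_bot_or_eq_top_of_forall_mem_mem_orthogonal [CompleteSpace H]
    {V : Submodule ℂ H} (hV : IsClosed (V : Set H))
    (h : ∀ v ∈ V, ∀ w ∈ Vᗮ, v = 0 ∨ w = 0) : V = ⊥ ∨ V = ⊤ := by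
  have : CompleteSpace V := hV.completeSpace_coe
  by_contra! hne
  obtain ⟨v, hv, hv0⟩ := Submodule.exists_mem_ne_zero_of_ne_bot hne.1
  obtain ⟨w, hw, hw0⟩ :=
    Submodule.exists_mem_ne_zero_of_ne_bot (mt Submodule.orthogonal_eq_bot_iff.mp hne.2)
  exact (h v hv w hw).elim hv0 hw0

theorem eq_zero_or_eq_zero_of_tendsto_integral_of_inner_eq_zero {G : Type*} [MeasurableSpace G]
    (π : G → H → H) (μ : ℕ → Measure G) {v w : H}
    (hconv : Tendsto (fun n => ∫ g, ⟪π g v, w⟫ * conj' ⟪π g v, w⟫ ∂(μ n)) atTop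
      (𝓝 (⟪v, v⟫ * conj' ⟪w, w⟫)))
    (hvw : ∀ g, ⟪π g v, w⟫ = 0) : v = 0 ∨ w = 0 := by
  simp only [hvw, zero_mul, integral_zero] at hconv
  have hlim : ⟪v, v⟫ * conj' ⟪w, w⟫ = 0 := tendsto_nhds_unique hconv tendsto_const_nhds
  simpa [inner_self_eq_zero] using hlim

end

theorem irreducible_of_asymptotic_schur_general
    {G : Type*} [Group G] [MeasurableSpace G]
    {H : Type*} [NormedAddCommGroup H] [InnerProductSpace ℂ H] [CompleteSpace H]
    (π : G →* (H ≃ₗᵢ[ℂ] H))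
    (μ : ℕ → Measure G)
    (hconv : ∀ v w v' w' : H,
      Tendsto (fun n => ∫ g, ⟪π g v, w⟫ * conj' ⟪π g v', w'⟫ ∂(μ n)) atTop
        (𝓝 (⟪v, v'⟫ * conj' ⟪w, w'⟫))) :
    ∀ V : Submodule ℂ H, IsClosed (V : Set H) → (∀ g : G, ∀ v ∈ V, π g v ∈ V) →
      V = ⊥ ∨ V = ⊤ := by
  intro V hV hinv
  refine Submodule.eq_bot_or_eq_top_of_forall_mem_mem_orthogonal hV fun v hv w hw => ?_
  exact eq_zero_or_eq_zero_of_tendsto_integral_of_inner_eq_zero (fun g => π g) μ (hconv v w v w)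
    fun g => Submodule.inner_right_of_mem_orthogonal (hinv g v hv) hw

/-- Let `π : G → U(H)` be a unitary representation of a locally compact group
on a nonzero complex Hilbert space, and `(μ n)` a family of bounded symmetric Borel measures on
`G`.  If for all `v, w, v', w' ∈ H` the matrix coefficient integrals
`∫ ⟪π g v, w⟫ * conj ⟪π g v', w'⟫ dμ_n` converge to `⟪v, v'⟫ * conj ⟪w, w'⟫`, then `π` is
irreducible: the only closed `π(G)`-invariant subspaces of `H` are `⊥` and `⊤`. -/
theorem irreducible_of_asymptotic_schur
    {G : Type*} [Group G] [TopologicalSpace G] [IsTopologicalGroup G]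
    [LocallyCompactSpace G] [T2Space G] [MeasurableSpace G] [BorelSpace G]
    {H : Type*} [NormedAddCommGroup H] [InnerProductSpace ℂ H] [CompleteSpace H] [Nontrivial H]
    (π : G →* (H ≃ₗᵢ[ℂ] H))
    (hπcont : ∀ v : H, Continuous fun g : G => π g v)
    (μ : ℕ → Measure G) [∀ n, IsFiniteMeasure (μ n)]
    (hμsymm : ∀ n, (μ n).map (fun g => g⁻¹) = μ n)
    (hconv : ∀ v w v' w' : H,
      Tendsto (fun n => ∫ g, ⟪π g v, w⟫ * conj' ⟪π g v', w'⟫ ∂(μ n)) atTop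
        (𝓝 (⟪v, v'⟫ * conj' ⟪w, w'⟫))) :
    ∀ V : Submodule ℂ H, IsClosed (V : Set H) → (∀ g : G, ∀ v ∈ V, π g v ∈ V) →
      V = ⊥ ∨ V = ⊤ :=
  irreducible_of_asymptotic_schur_general π μ hconv
end

section
/- Let G be a compact Hausdorff group and π : G → U(H) a strongly continuous irreducible unitary representation on a nonzero complex Hilbert space H. Then H is finite dimensional. -/
/-!
Fix a unit vector `v` and average the rank-one operators `|π g v⟩⟨π g v|` against Haar measure
`μ`, giving `T` with `⟪w, T w⟫ = ∫ |⟪π g v, w⟫|² dμ`. Invariance of `μ` makes `T` commute with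
`π`, and `T` is self-adjoint, so Schur's lemma forces `T = c • 1`. Schur's lemma holds because two
distinct points of the spectrum of `T` would be separated by functions `f`, `g` with disjoint
supports: `cfc f T` and `cfc g T` would be nonzero, commute with `π` and multiply to zero, while a
nonzero operator commuting with an irreducible family has dense range.
Taking `w = v` gives `c > 0`, and Bessel's inequality gives `n c ≤ μ G` for every orthonormal family
of size `n`.
-/

open MeasureTheory InnerProductSpace

lemma FiniteDimensional.of_orthonormal_card_le {𝕜 E : Type*} [RCLike 𝕜] [NormedAddCommGroup E]
    [InnerProductSpace 𝕜 E] (N : ℕ) (h : ∀ n (e : Fin n → E), Orthonormal 𝕜 e → n ≤ N) :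
    FiniteDimensional 𝕜 E :=
  Module.rank_lt_aleph0_iff.mp <| (rank_le fun s hs ↦
    h _ _ (gramSchmidtNormed_orthonormal (hs.comp _ s.equivFin.symm.injective))).trans_lt
      Cardinal.natCast_lt_aleph0

section Schur

variable {ι 𝕜 E : Type*} [NormedField 𝕜] [NormedAddCommGroup E] [NormedSpace 𝕜 E]

def TopologicallyIrreducible (A : ι → E →L[𝕜] E) : Prop :=
  ∀ V : Submodule 𝕜 E, IsClosed (V : Set E) → (∀ i, ∀ v ∈ V, A i v ∈ V) → V = ⊥ ∨ V = ⊤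

lemma TopologicallyIrreducible.denseRange_of_commute {A : ι → E →L[𝕜] E}
    (hA : TopologicallyIrreducible A) {S : E →L[𝕜] E} (hS : S ≠ 0)
    (hcomm : ∀ i, Commute (A i) S) : DenseRange S := by
  set W := LinearMap.range (S : E →ₗ[𝕜] E)
  set V := W.topologicalClosure
  have hinv : ∀ i, ∀ v ∈ V, A i v ∈ V := fun i ↦ by
    have : Set.MapsTo (A i) W W := by
      rintro _ ⟨x, rfl⟩
      exact ⟨A i x, DFunLike.congr_fun (hcomm i).eq.symm x⟩
    exact this.closure (A i).continuous
  rcases hA V (Submodule.isClosed_topologicalClosure _) hinv with hV | hV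
  · refine absurd (ContinuousLinearMap.ext fun x ↦ ?_) hS
    simpa [V, hV] using
      Submodule.le_topologicalClosure W (LinearMap.mem_range_self (S : E →ₗ[𝕜] E) x)
  · rw [DenseRange, dense_iff_closure_eq]
    simpa [V, W, Submodule.topologicalClosure_coe, LinearMap.coe_range] using congr(($hV : Set E))

lemma TopologicallyIrreducible.eq_zero_of_mul_eq_zero_of_commute {A : ι → E →L[𝕜] E}
    (hA : TopologicallyIrreducible A) {S R : E →L[𝕜] E} (hS : S ≠ 0)
    (hcomm : ∀ i, Commute (A i) S) (hRS : R * S = 0) : R = 0 :=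
  DFunLike.coe_injective <| (hA.denseRange_of_commute hS hcomm).equalizer R.continuous
    continuous_zero congr(⇑$hRS)

variable {H : Type*} [NormedAddCommGroup H] [InnerProductSpace ℂ H] [CompleteSpace H]
  {A : ι → H →L[ℂ] H}

lemma IsSelfAdjoint.spectrum_subsingleton_of_commute (hA : TopologicallyIrreducible A)
    {T : H →L[ℂ] H} (hT : IsSelfAdjoint T) (hcomm : ∀ i, Commute (A i) T) :
    (spectrum ℝ T).Subsingleton := by
  intro a ha b hb
  by_contra hab
  obtain ⟨δ, hδ, hδab⟩ : ∃ δ : ℝ, 0 < δ ∧ 2 * δ = |a - b| := ⟨|a - b| / 2, by positivity, by ring⟩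
  let f : ℝ → ℝ := fun x ↦ max (δ - |x - a|) 0
  let g : ℝ → ℝ := fun x ↦ max (δ - |x - b|) 0
  have hgf : cfc g T * cfc f T = 0 := by
    rw [← cfc_mul g f T, ← cfc_zero ℝ T]
    refine cfc_congr fun x _ ↦ ?_
    have htri : 2 * δ ≤ |x - a| + |x - b| := hδab ▸ abs_sub_comm a x ▸ abs_sub_le a x b
    rcases le_total (δ - |x - a|) 0 with h | h
    · simp [f, h]
    · simp [g, show δ - |x - b| ≤ 0 by linarith]
  have hf : cfc f T ≠ 0 := fun h ↦ hδ.not_ge <| by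
    simpa [f, h] using norm_apply_le_norm_cfc f T ha
  have hg : cfc g T ≠ 0 := fun h ↦ hδ.not_ge <| by
    simpa [g, h] using norm_apply_le_norm_cfc g T hb
  exact hg <| hA.eq_zero_of_mul_eq_zero_of_commute hf
    (fun i ↦ ((hcomm i).symm.cfc_real f).symm) hgf

lemma IsSelfAdjoint.exists_eq_algebraMap_of_commute [Nontrivial H]
    (hA : TopologicallyIrreducible A) {T : H →L[ℂ] H} (hT : IsSelfAdjoint T)
    (hcomm : ∀ i, Commute (A i) T) : ∃ c : ℝ, T = algebraMap ℝ (H →L[ℂ] H) c := by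
  obtain ⟨c, hc⟩ := ContinuousFunctionalCalculus.spectrum_nonempty (R := ℝ) T hT
  exact ⟨c, CFC.eq_algebraMap_of_spectrum_subset_singleton T c
    fun x hx ↦ hT.spectrum_subsingleton_of_commute hA hcomm hx hc⟩

end Schur

section FrameOperator

variable {X : Type*} [TopologicalSpace X] [CompactSpace X] [MeasurableSpace X]
  [OpensMeasurableSpace X] (μ : Measure X) [IsFiniteMeasure μ]
  {H : Type*} [NormedAddCommGroup H] [InnerProductSpace ℂ H] {u : X → H}

lemma Continuous.integrable_of_compactSpace {E : Type*} [NormedAddCommGroup E] {f : X → E}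
    (hf : Continuous f) : Integrable f μ :=
  hf.integrable_of_hasCompactSupport (.of_compactSpace f)

noncomputable def frameOperator (u : X → H) : H →L[ℂ] H :=
  ∫ x, rankOne ℂ (u x) (u x) ∂μ

variable {μ}

lemma frameOperator_apply (hu : Continuous u) (w : H) :
    frameOperator μ u w = ∫ x, inner ℂ (u x) w • u x ∂μ := by
  have : Continuous fun x ↦ rankOne ℂ (u x) (u x) := by simp only [rankOne_def]; fun_prop
  exact ContinuousLinearMap.integral_apply (this.integrable_of_compactSpace μ) w

variable [CompleteSpace H]

lemma inner_frameOperator_apply (hu : Continuous u) (w w' : H) :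
    inner ℂ w' (frameOperator μ u w) = ∫ x, inner ℂ (u x) w * inner ℂ w' (u x) ∂μ := by
  have : Continuous fun x ↦ inner ℂ (u x) w • u x := by fun_prop
  rw [frameOperator_apply hu, ← integral_inner (this.integrable_of_compactSpace μ)]
  simp_rw [inner_smul_right]

lemma re_inner_frameOperator_self (hu : Continuous u) (w : H) :
    RCLike.re (inner ℂ w (frameOperator μ u w)) = ∫ x, ‖inner ℂ (u x) w‖ ^ 2 ∂μ := by
  have : Continuous fun x ↦ inner ℂ (u x) w * inner ℂ w (u x) := by fun_prop
  rw [inner_frameOperator_apply hu, ← integral_re (this.integrable_of_compactSpace μ)]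
  congr 1 with x
  rw [← inner_conj_symm w (u x), RCLike.mul_conj, ← RCLike.ofReal_pow, RCLike.ofReal_re]

lemma isSelfAdjoint_frameOperator (hu : Continuous u) : IsSelfAdjoint (frameOperator μ u) := by
  rw [ContinuousLinearMap.isSelfAdjoint_iff_isSymmetric]
  intro w w'
  change inner ℂ (frameOperator μ u w) w' = inner ℂ w (frameOperator μ u w')
  rw [← inner_conj_symm, inner_frameOperator_apply hu, inner_frameOperator_apply hu,
    ← integral_conj]
  congr 1 with x
  simp only [map_mul, inner_conj_symm, mul_comm]

lemma re_inner_frameOperator_self_pos [μ.IsOpenPosMeasure] (hu : Continuous u) {w : H} {x₀ : X}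
    (hx₀ : inner ℂ (u x₀) w ≠ 0) : 0 < RCLike.re (inner ℂ w (frameOperator μ u w)) := by
  rw [re_inner_frameOperator_self hu]
  have : Continuous fun x ↦ ‖inner ℂ (u x) w‖ ^ 2 := by fun_prop
  exact integral_pos_of_integrable_nonneg_nonzero this (this.integrable_of_compactSpace μ)
    (fun x ↦ by positivity) (by simpa using hx₀)

lemma sum_re_inner_frameOperator_le (hu : Continuous u) {ι : Type*} {e : ι → H}
    (he : Orthonormal ℂ e) (s : Finset ι) :
    ∑ i ∈ s, RCLike.re (inner ℂ (e i) (frameOperator μ u (e i))) ≤ ∫ x, ‖u x‖ ^ 2 ∂μ := by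
  have hint : ∀ i, Integrable (fun x ↦ ‖inner ℂ (u x) (e i)‖ ^ 2) μ := fun i ↦
    (by fun_prop : Continuous fun x ↦ ‖inner ℂ (u x) (e i)‖ ^ 2).integrable_of_compactSpace μ
  simp_rw [re_inner_frameOperator_self hu, ← integral_finsetSum s fun i _ ↦ hint i]
  refine integral_mono (integrable_finsetSum s fun i _ ↦ hint i)
    ((by fun_prop : Continuous fun x ↦ ‖u x‖ ^ 2).integrable_of_compactSpace μ) fun x ↦ ?_
  simpa only [norm_inner_symm] using he.sum_inner_products_le (u x)

lemma commute_frameOperator {G : Type*} [Group G] [TopologicalSpace G] [CompactSpace G]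
    [MeasurableSpace G] [OpensMeasurableSpace G] [MeasurableMul G] {μ : Measure G}
    [IsFiniteMeasure μ] [μ.IsMulLeftInvariant] {u : G → H} (hu : Continuous u)
    (U : H ≃ₗᵢ[ℂ] H) (h : G) (hU : ∀ g, u (h * g) = U (u g)) :
    Commute (U : H →L[ℂ] H) (frameOperator μ u) := by
  ext w
  change U (frameOperator μ u w) = frameOperator μ u (U w)
  rw [frameOperator_apply hu, frameOperator_apply hu]
  conv_rhs => rw [← integral_mul_left_eq_self _ h]
  refine (U.toLinearIsometry.integral_comp_comm _).symm.trans
    (integral_congr_ae (.of_forall fun g ↦ ?_))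
  simp [hU, LinearIsometryEquiv.inner_map_map]

end FrameOperator

theorem finiteDimensional_of_compact_irreducible_general
    {G : Type*} [Group G] [TopologicalSpace G] [IsTopologicalGroup G]
    [CompactSpace G]
    {H : Type*} [NormedAddCommGroup H] [InnerProductSpace ℂ H] [CompleteSpace H] [Nontrivial H]
    (π : G →* (H ≃ₗᵢ[ℂ] H))
    (hπcont : ∀ v : H, Continuous fun g : G => π g v)
    (hirr : ∀ V : Submodule ℂ H, IsClosed (V : Set H) →
      (∀ g : G, ∀ v ∈ V, π g v ∈ V) → V = ⊥ ∨ V = ⊤) :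
    FiniteDimensional ℂ H := by
  borelize G
  obtain ⟨v, hv⟩ := exists_norm_eq H zero_le_one
  let μ : Measure G := Measure.haar
  let u : G → H := fun g ↦ π g v
  have hu : Continuous u := hπcont v
  have hπirr : TopologicallyIrreducible fun g ↦ (π g : H →L[ℂ] H) := hirr
  have hcomm : ∀ g, Commute (π g : H →L[ℂ] H) (frameOperator μ u) := fun g ↦
    commute_frameOperator hu (π g) g fun g' ↦ by simp [u, map_mul]
  obtain ⟨c, hTc⟩ := (isSelfAdjoint_frameOperator hu).exists_eq_algebraMap_of_commute hπirr hcomm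
  have hre : ∀ w, RCLike.re (inner ℂ w (frameOperator μ u w)) = c * ‖w‖ ^ 2 := fun w ↦ by
    simp [hTc, ← Complex.ofReal_pow]
  have hc : 0 < c := by
    have := re_inner_frameOperator_self_pos (μ := μ) hu (w := v) (x₀ := 1) (by simp [u, hv])
    rwa [hre, hv, one_pow, mul_one] at this
  refine FiniteDimensional.of_orthonormal_card_le ⌊μ.real Set.univ / c⌋₊ fun n e he ↦ ?_
  have := sum_re_inner_frameOperator_le (μ := μ) hu he Finset.univ
  simp only [hre, he.1, one_pow, mul_one, Finset.sum_const, Finset.card_univ, Fintype.card_fin,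
    nsmul_eq_mul, LinearIsometryEquiv.norm_map, hv, integral_const, smul_eq_mul, u] at this
  exact Nat.le_floor ((le_div_iff₀ hc).2 this)

/-- Every strongly continuous irreducible unitary representation of a compact
Hausdorff group on a nonzero complex Hilbert space is finite dimensional. -/
theorem finiteDimensional_of_compact_irreducible
    {G : Type*} [Group G] [TopologicalSpace G] [IsTopologicalGroup G]
    [CompactSpace G] [T2Space G]
    {H : Type*} [NormedAddCommGroup H] [InnerProductSpace ℂ H] [CompleteSpace H] [Nontrivial H]
    (π : G →* (H ≃ₗᵢ[ℂ] H))
    (hπcont : ∀ v : H, Continuous fun g : G => π g v)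
    (hirr : ∀ V : Submodule ℂ H, IsClosed (V : Set H) →
      (∀ g : G, ∀ v ∈ V, π g v ∈ V) → V = ⊥ ∨ V = ⊤) :
    FiniteDimensional ℂ H :=
  finiteDimensional_of_compact_irreducible_general π hπcont hirr
end

section
/- Let π : G → U(H) be a unitary representation of a locally compact unimodular group with Haar measure dg, let L be a length function on G with balls B_n, and suppose there exist d ∈ ℕ and f > 0 such that for all v, w, v', w' ∈ H, lim_{n→∞} (f/n^d) ∫_{B_n} ⟨π(g)v,w⟩·conj(⟨π(g)v',w'⟩) dg = ⟨v,v'⟩·conj(⟨w,w'⟩). Then π has property RD with respect to L: there exists a polynomial P(X) ∈ ℝ[X] such that for all v, w ∈ H with ‖v‖ ≤ 1 and ‖w‖ ≤ 1 and all n ∈ ℕ, ∫_{B_n} |⟨π(g)v,w⟩|² dg ≤ P(n). -/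
open MeasureTheory Filter Topology

local notation "⟪" x ", " y "⟫" => @inner ℂ _ _ x y
local notation "conj'" => starRingEnd ℂ

/-!
For each ball `B_n`, `(v, w) ↦ 1_{B_n} · ⟪π(·) v, w⟫` is a bounded sesquilinear map
`H × H → L²(G)` whose value has squared norm `∫_{B_n} |⟪π(g) v, w⟫|² dg`. Taking `v' = v`,
`w' = w` in the asymptotic Schur relation shows that for each fixed pair `(v, w)` this grows at
most like `(n + 1)^d`. Banach–Steinhaus, applied once in each variable, makes the bound uniform
over the unit ball.
-/

namespace MeasureTheory

theorem MemLp.norm_toLp_sq {α E : Type*} [MeasurableSpace α] {μ : Measure α}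
    [NormedAddCommGroup E] {f : α → E} (hf : MemLp f 2 μ) :
    ‖hf.toLp f‖ ^ 2 = ∫ a, ‖f a‖ ^ 2 ∂μ := by
  have hint : 0 ≤ ∫ a, ‖f a‖ ^ (2 : ℝ) ∂μ := integral_nonneg fun _ ↦ by positivity
  rw [Lp.norm_toLp, hf.eLpNorm_eq_integral_rpow_norm two_ne_zero ENNReal.ofNat_ne_top,
    ENNReal.toReal_ofReal (by positivity), ENNReal.toReal_ofNat, ← Real.rpow_natCast,
    ← Real.rpow_mul hint]
  norm_num

end MeasureTheory

theorem integral_mul_conj_eq_integral_norm_sq {α 𝕜 : Type*} [MeasurableSpace α] {μ : Measure α}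
    [RCLike 𝕜] (f : α → 𝕜) :
    ∫ a, f a * starRingEnd 𝕜 (f a) ∂μ = ((∫ a, ‖f a‖ ^ 2 ∂μ : ℝ) : 𝕜) := by
  simp_rw [RCLike.mul_conj, ← RCLike.ofReal_pow]
  exact integral_ofReal

theorem measure_setOf_le_ne_top {X : Type*} [TopologicalSpace X] [MeasurableSpace X]
    {μ : Measure X} [IsFiniteMeasureOnCompacts μ] {L : X → ℝ} (hL_nonneg : ∀ x, 0 ≤ L x)
    (hL_proper : ∀ s : Set ℝ, Bornology.IsBounded s → IsCompact (closure (L ⁻¹' s))) (t : ℝ) :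
    μ {x | L x ≤ t} ≠ ⊤ := by
  have hsub : {x | L x ≤ t} ⊆ closure (L ⁻¹' Set.Icc 0 t) :=
    fun x hx ↦ subset_closure ⟨hL_nonneg x, hx⟩
  exact ((measure_mono hsub).trans_lt
    (hL_proper _ (Metric.isBounded_Icc 0 t)).measure_lt_top).ne

theorem exists_norm_le_mul_add_one_pow_of_tendsto {𝕜 : Type*} [RCLike 𝕜] {q : ℕ → 𝕜} {c l : 𝕜}
    (hc : c ≠ 0) {d : ℕ} (h : Tendsto (fun n : ℕ ↦ c / (n : 𝕜) ^ d * q n) atTop (𝓝 l)) :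
    ∃ C, ∀ n : ℕ, ‖q n‖ ≤ C * ((n : ℝ) + 1) ^ d := by
  obtain ⟨K, hK⟩ := h.norm.bddAbove_range
  refine ⟨max (K / ‖c‖) ‖q 0‖, fun n ↦ ?_⟩
  rcases Nat.eq_zero_or_pos n with rfl | hn
  · simp
  have hpow : (0 : ℝ) < (n : ℝ) ^ d := by positivity
  have hKn : ‖c‖ / (n : ℝ) ^ d * ‖q n‖ ≤ K := by
    simpa [norm_mul, norm_div, norm_pow] using hK ⟨n, rfl⟩
  calc ‖q n‖ ≤ K / ‖c‖ * (n : ℝ) ^ d := by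
        rw [div_mul_eq_mul_div, le_div_iff₀ (norm_pos_iff.2 hc)]
        rw [div_mul_eq_mul_div, div_le_iff₀ hpow] at hKn
        linarith
    _ ≤ max (K / ‖c‖) ‖q 0‖ * ((n : ℝ) + 1) ^ d :=
        mul_le_mul (le_max_left _ _) (pow_le_pow_left₀ (by positivity) (by linarith) d)
          (by positivity) ((norm_nonneg _).trans (le_max_right _ _))

section BanachSteinhaus

variable {𝕜₁ 𝕜₂ 𝕜₃ : Type*} [NontriviallyNormedField 𝕜₁] [NontriviallyNormedField 𝕜₂]
  [NontriviallyNormedField 𝕜₃] {σ₁₃ : 𝕜₁ →+* 𝕜₃} {σ₂₃ : 𝕜₂ →+* 𝕜₃}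
  [RingHomIsometric σ₁₃] [RingHomIsometric σ₂₃]
  {E F G : Type*} [NormedAddCommGroup E] [NormedSpace 𝕜₁ E] [CompleteSpace E]
  [NormedAddCommGroup F] [NormedSpace 𝕜₂ F] [CompleteSpace F]
  [NormedAddCommGroup G] [NormedSpace 𝕜₃ G] {ι : Type*} {B : ι → E →SL[σ₁₃] F →SL[σ₂₃] G}

theorem banach_steinhaus₂ (h : ∀ x y, ∃ C, ∀ i, ‖B i x y‖ ≤ C) : ∃ C, ∀ i, ‖B i‖ ≤ C := by
  have hflip : ∀ y, ∃ C, ∀ i, ‖(B i).flip y‖ ≤ C := fun y ↦ banach_steinhaus fun x ↦ h x y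
  obtain ⟨C, hC⟩ := banach_steinhaus hflip
  exact ⟨C, fun i ↦ ((B i).opNorm_flip).symm.trans_le (hC i)⟩

theorem banach_steinhaus₂_of_le_mul {r : ι → 𝕜₃} (hr : ∀ i, r i ≠ 0)
    (h : ∀ x y, ∃ C, ∀ i, ‖B i x y‖ ≤ C * ‖r i‖) :
    ∃ C, ∀ i x y, ‖B i x y‖ ≤ C * ‖r i‖ * ‖x‖ * ‖y‖ := by
  have hscaled : ∀ i x y, ‖((r i)⁻¹ • B i) x y‖ = ‖B i x y‖ / ‖r i‖ := fun i x y ↦ by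
    rw [smul_apply, smul_apply, norm_smul, norm_inv, inv_mul_eq_div]
  obtain ⟨C, hC⟩ := banach_steinhaus₂ (B := fun i ↦ (r i)⁻¹ • B i) fun x y ↦ by
    obtain ⟨C, hC⟩ := h x y
    exact ⟨C, fun i ↦ by
      rw [hscaled, div_le_iff₀ (norm_pos_iff.2 (hr i))]; exact hC i⟩
  refine ⟨C, fun i x y ↦ ?_⟩
  have := ((r i)⁻¹ • B i).le_opNorm₂ x y
  rw [hscaled, div_le_iff₀ (norm_pos_iff.2 (hr i))] at this
  calc ‖B i x y‖ ≤ ‖(r i)⁻¹ • B i‖ * ‖x‖ * ‖y‖ * ‖r i‖ := this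
    _ ≤ C * ‖x‖ * ‖y‖ * ‖r i‖ := by gcongr; exact hC i
    _ = C * ‖r i‖ * ‖x‖ * ‖y‖ := by ring

end BanachSteinhaus

section MatrixCoefficient

variable {G : Type*} [MeasurableSpace G] {μ : Measure G}
  {H : Type*} [NormedAddCommGroup H] [InnerProductSpace ℂ H]
  {U : G → H ≃ₗᵢ[ℂ] H} {s : Set G}

theorem norm_inner_linearIsometryEquiv_le (T : H ≃ₗᵢ[ℂ] H) (v w : H) :
    ‖⟪T v, w⟫‖ ≤ ‖v‖ * ‖w‖ :=
  (norm_inner_le_norm _ _).trans_eq (by rw [T.norm_map])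

theorem memLp_indicator_inner
    (hU : ∀ v w, AEStronglyMeasurable (fun g ↦ ⟪U g v, w⟫) μ)
    (hs : MeasurableSet s) (hμs : μ s ≠ ⊤) (v w : H) :
    MemLp (s.indicator fun g ↦ ⟪U g v, w⟫) 2 μ := by
  have : IsFiniteMeasure (μ.restrict s) := isFiniteMeasure_restrict.2 hμs
  refine (memLp_indicator_iff_restrict hs).2 (MemLp.of_bound (hU v w).restrict (‖v‖ * ‖w‖) ?_)
  exact ae_of_all _ fun g ↦ norm_inner_linearIsometryEquiv_le (U g) v w

theorem norm_toLp_indicator_inner_sq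
    (hU : ∀ v w, AEStronglyMeasurable (fun g ↦ ⟪U g v, w⟫) μ)
    (hs : MeasurableSet s) (hμs : μ s ≠ ⊤) (v w : H) :
    ‖(memLp_indicator_inner hU hs hμs v w).toLp _‖ ^ 2 = ∫ g in s, ‖⟪U g v, w⟫‖ ^ 2 ∂μ := by
  rw [MemLp.norm_toLp_sq, ← integral_indicator hs]
  congr 1 with g
  by_cases hg : g ∈ s <;> simp [hg]

theorem norm_toLp_indicator_inner_le
    (hU : ∀ v w, AEStronglyMeasurable (fun g ↦ ⟪U g v, w⟫) μ)
    (hs : MeasurableSet s) (hμs : μ s ≠ ⊤) (v w : H) :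
    ‖(memLp_indicator_inner hU hs hμs v w).toLp _‖ ≤ √(μ.real s) * ‖v‖ * ‖w‖ := by
  have : IsFiniteMeasure (μ.restrict s) := isFiniteMeasure_restrict.2 hμs
  have hint : ∫ g in s, ‖⟪U g v, w⟫‖ ^ 2 ∂μ ≤ μ.real s * (‖v‖ * ‖w‖) ^ 2 := by
    refine (integral_mono_of_nonneg (ae_of_all _ fun _ ↦ by positivity)
      (integrable_const ((‖v‖ * ‖w‖) ^ 2)) (ae_of_all _ fun g ↦ ?_)).trans_eq
      (by rw [integral_const, smul_eq_mul, measureReal_restrict_apply_univ])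
    exact pow_le_pow_left₀ (norm_nonneg _) (norm_inner_linearIsometryEquiv_le (U g) v w) 2
  rw [← norm_toLp_indicator_inner_sq hU hs hμs v w] at hint
  calc _ = √(‖(memLp_indicator_inner hU hs hμs v w).toLp _‖ ^ 2) :=
        (Real.sqrt_sq (norm_nonneg _)).symm
    _ ≤ √(μ.real s * (‖v‖ * ‖w‖) ^ 2) := Real.sqrt_le_sqrt hint
    _ = √(μ.real s) * ‖v‖ * ‖w‖ := by
      rw [Real.sqrt_mul measureReal_nonneg, Real.sqrt_sq (by positivity), mul_assoc]

section

variable (hU : ∀ v w, AEStronglyMeasurable (fun g ↦ ⟪U g v, w⟫) μ)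
  (hs : MeasurableSet s) (hμs : μ s ≠ ⊤)

/-- The indicator of `s`, rather than `L²(μ.restrict s)`, keeps the codomain independent of `s`,
so that families of these maps over varying `s` fall under Banach–Steinhaus. -/
noncomputable def matrixCoeffL2 : H →L⋆[ℂ] H →L[ℂ] Lp ℂ 2 μ :=
  LinearMap.mkContinuous₂
    (LinearMap.mk₂'ₛₗ (starRingEnd ℂ) (RingHom.id ℂ)
      (fun v w ↦ (memLp_indicator_inner hU hs hμs v w).toLp _)
      (fun v v' w ↦ by
        rw [← MemLp.toLp_add]
        exact MemLp.toLp_congr _ _ (ae_of_all _ fun g ↦ by by_cases hg : g ∈ s <;> simp [hg]))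
      (fun c v w ↦ by
        rw [← MemLp.toLp_const_smul]
        exact MemLp.toLp_congr _ _ (ae_of_all _ fun g ↦ by
          by_cases hg : g ∈ s <;> simp [hg, mul_comm]))
      (fun v w w' ↦ by
        rw [← MemLp.toLp_add]
        exact MemLp.toLp_congr _ _ (ae_of_all _ fun g ↦ by by_cases hg : g ∈ s <;> simp [hg]))
      (fun c v w ↦ by
        rw [← MemLp.toLp_const_smul]
        exact MemLp.toLp_congr _ _ (ae_of_all _ fun g ↦ by by_cases hg : g ∈ s <;> simp [hg])))
    (√(μ.real s)) (norm_toLp_indicator_inner_le hU hs hμs)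

theorem norm_matrixCoeffL2_sq (v w : H) :
    ‖matrixCoeffL2 hU hs hμs v w‖ ^ 2 = ∫ g in s, ‖⟪U g v, w⟫‖ ^ 2 ∂μ :=
  norm_toLp_indicator_inner_sq hU hs hμs v w

end

theorem exists_setIntegral_norm_inner_sq_le [CompleteSpace H] {ι : Type*} {s : ι → Set G}
    (hU : ∀ v w, AEStronglyMeasurable (fun g ↦ ⟪U g v, w⟫) μ) (hs : ∀ i, MeasurableSet (s i))
    (hμs : ∀ i, μ (s i) ≠ ⊤) {a : ι → ℝ} (ha : ∀ i, 0 < a i)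
    (h : ∀ v w, ∃ C, ∀ i, ∫ g in s i, ‖⟪U g v, w⟫‖ ^ 2 ∂μ ≤ C * a i) :
    ∃ C, 0 ≤ C ∧ ∀ i v w, ∫ g in s i, ‖⟪U g v, w⟫‖ ^ 2 ∂μ ≤ C * a i * (‖v‖ * ‖w‖) ^ 2 := by
  have hr (i : ι) : ‖((√(a i) : ℝ) : ℂ)‖ = √(a i) := by simp
  obtain ⟨C, hC⟩ := banach_steinhaus₂_of_le_mul (B := fun i ↦ matrixCoeffL2 hU (hs i) (hμs i))
      (r := fun i ↦ ((√(a i) : ℝ) : ℂ)) (fun i ↦ by simpa using (Real.sqrt_pos.2 (ha i)).ne')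
      fun v w ↦ by
    obtain ⟨C, hC⟩ := h v w
    refine ⟨√C, fun i ↦ ?_⟩
    rw [hr, ← Real.sqrt_mul' _ (ha i).le, ← Real.sqrt_sq (norm_nonneg _), norm_matrixCoeffL2_sq]
    exact Real.sqrt_le_sqrt (hC i)
  refine ⟨C ^ 2, sq_nonneg C, fun i v w ↦ ?_⟩
  rw [← norm_matrixCoeffL2_sq hU (hs i) (hμs i)]
  calc _ ≤ (C * √(a i) * ‖v‖ * ‖w‖) ^ 2 :=
        pow_le_pow_left₀ (norm_nonneg _) (hr i ▸ hC i v w) 2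
    _ = C ^ 2 * a i * (‖v‖ * ‖w‖) ^ 2 := by
      linear_combination (C ^ 2 * (‖v‖ * ‖w‖) ^ 2) * Real.sq_sqrt (ha i).le

end MatrixCoefficient

theorem property_RD_of_asymptotic_schur_general
    {G : Type*} [Group G] [TopologicalSpace G]
    [MeasurableSpace G] [BorelSpace G]
    (haar : Measure G) [haar.IsHaarMeasure]
    {H : Type*} [NormedAddCommGroup H] [InnerProductSpace ℂ H] [CompleteSpace H]
    (π : G →* (H ≃ₗᵢ[ℂ] H))
    (hπcont : ∀ v : H, Continuous fun g : G => π g v)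
    (L : G → ℝ) (hL_meas : Measurable L) (hL_nonneg : ∀ g, 0 ≤ L g)
    (hL_proper : ∀ s : Set ℝ, Bornology.IsBounded s → IsCompact (closure (L ⁻¹' s)))
    (d : ℕ) (f : ℝ) (hf : 0 < f)
    (hconv : ∀ v w v' w' : H,
      Tendsto (fun n : ℕ =>
          ((f : ℂ) / (n : ℂ) ^ d) *
            ∫ g in {g : G | L g ≤ (n : ℝ)}, ⟪π g v, w⟫ * conj' ⟪π g v', w'⟫ ∂haar) atTop
        (𝓝 (⟪v, v'⟫ * conj' ⟪w, w'⟫))) :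
    ∃ P : Polynomial ℝ, ∀ v w : H, ‖v‖ ≤ 1 → ‖w‖ ≤ 1 → ∀ n : ℕ,
      ∫ g in {g : G | L g ≤ (n : ℝ)}, ‖⟪π g v, w⟫‖ ^ 2 ∂haar ≤ P.eval (n : ℝ) := by
  have hmeas (v w : H) : AEStronglyMeasurable (fun g ↦ ⟪π g v, w⟫) haar :=
    ((hπcont v).inner continuous_const).aestronglyMeasurable
  obtain ⟨C, hC_nonneg, hC⟩ := exists_setIntegral_norm_inner_sq_le hmeas
      (fun n : ℕ ↦ hL_meas measurableSet_Iic)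
      (fun n ↦ measure_setOf_le_ne_top hL_nonneg hL_proper n)
      (a := fun n : ℕ ↦ ((n : ℝ) + 1) ^ d) (fun n ↦ by positivity) fun v w ↦ by
    obtain ⟨C, hC⟩ := exists_norm_le_mul_add_one_pow_of_tendsto
      (Complex.ofReal_ne_zero.2 hf.ne') (hconv v w v w)
    refine ⟨C, fun n ↦ ?_⟩
    have hn := hC n
    rwa [integral_mul_conj_eq_integral_norm_sq, RCLike.norm_ofReal,
      abs_of_nonneg (integral_nonneg fun _ ↦ by positivity)] at hn
  refine ⟨Polynomial.C C * (Polynomial.X + 1) ^ d, fun v w hv hw n ↦ ?_⟩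
  simp only [Polynomial.eval_mul, Polynomial.eval_C, Polynomial.eval_pow, Polynomial.eval_add,
    Polynomial.eval_X, Polynomial.eval_one]
  have hvw : (‖v‖ * ‖w‖) ^ 2 ≤ 1 := pow_le_one₀ (by positivity) (mul_le_one₀ hv (norm_nonneg _) hw)
  exact (hC n v w).trans (mul_le_of_le_one_right (by positivity) hvw)

/-- **Asymptotic Schur orthogonality implies property RD.** Let `π : G → U(H)`
be a unitary representation of a locally compact unimodular group with Haar measure `haar`,
`L` a length function on `G` with balls `B_n = {g | L g ≤ n}`, and suppose there exist `d ∈ ℕ`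
and `f > 0` such that for all `v, w, v', w' ∈ H`,
`(f / n^d) ∫_{B_n} ⟪π g v, w⟫ * conj ⟪π g v', w'⟫ dg → ⟪v, v'⟫ * conj ⟪w, w'⟫`.
Then `π` has property RD with respect to `L`: there is a real polynomial `P` such that for all
unit-ball vectors `v, w` and all `n ∈ ℕ`, `∫_{B_n} |⟪π g v, w⟫|² dg ≤ P(n)`. -/
theorem property_RD_of_asymptotic_schur
    {G : Type*} [Group G] [TopologicalSpace G] [IsTopologicalGroup G]
    [LocallyCompactSpace G] [T2Space G] [MeasurableSpace G] [BorelSpace G]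
    (haar : Measure G) [haar.IsHaarMeasure] [haar.IsMulRightInvariant]
    {H : Type*} [NormedAddCommGroup H] [InnerProductSpace ℂ H] [CompleteSpace H]
    (π : G →* (H ≃ₗᵢ[ℂ] H))
    (hπcont : ∀ v : H, Continuous fun g : G => π g v)
    (L : G → ℝ) (hL_meas : Measurable L) (hL_nonneg : ∀ g, 0 ≤ L g)
    (hL_one : L 1 = 0)
    (hL_inv : ∀ g, L g⁻¹ = L g)
    (hL_sub : ∀ g h : G, L (g * h) ≤ L g + L h)
    (hL_proper : ∀ s : Set ℝ, Bornology.IsBounded s → IsCompact (closure (L ⁻¹' s)))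
    (d : ℕ) (f : ℝ) (hf : 0 < f)
    (hconv : ∀ v w v' w' : H,
      Tendsto (fun n : ℕ =>
          ((f : ℂ) / (n : ℂ) ^ d) *
            ∫ g in {g : G | L g ≤ (n : ℝ)}, ⟪π g v, w⟫ * conj' ⟪π g v', w'⟫ ∂haar) atTop
        (𝓝 (⟪v, v'⟫ * conj' ⟪w, w'⟫))) :
    ∃ P : Polynomial ℝ, ∀ v w : H, ‖v‖ ≤ 1 → ‖w‖ ≤ 1 → ∀ n : ℕ,
      ∫ g in {g : G | L g ≤ (n : ℝ)}, ‖⟪π g v, w⟫‖ ^ 2 ∂haar ≤ P.eval (n : ℝ) :=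
  property_RD_of_asymptotic_schur_general haar π hπcont L hL_meas hL_nonneg hL_proper d f hf hconv
end
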